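/- Let q be a prime power, r ≥ 1, 0 ≤ k ≤ r, and let s, s' be integers with s' ≥ s ≥ r-k ≥ 1. Then for every r×s' matrix M' over 𝔽_q there exists an r×s matrix M over 𝔽_q, whose columns form a sub-multiset of the columns of M', such that the k-dependence of M is at most the k-dependence of M'. Consequently, the minimum possible k-dependence of an r×s matrix over 𝔽_q is a non-decreasing function of s on s ≥ r-k. -/

import Mathlib

open Finset

section Aux
variable {α : Type*} [Fintype α] [DecidableEq α]

lemma aux_card_superset (S : Finset α) {s : ℕ} (hS : S.card ≤ s) :
    ((univ.powersetCard s).filter (fun T => S ⊆ T)).card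
      = (Fintype.card α - S.card).choose (s - S.card) := by
  rw [← Finset.card_compl S, ← card_powersetCard (s - S.card) Sᶜ]
  apply Finset.card_nbij' (fun T => T \ S) (fun V => V ∪ S)
  · intro T hT
    simp only [mem_coe, mem_filter, mem_powersetCard] at hT ⊢
    obtain ⟨⟨-, hcard⟩, hsub⟩ := hT
    refine ⟨fun x hx => ?_, ?_⟩
    · simp only [mem_sdiff] at hx
      simp [hx.2]
    · rw [card_sdiff_of_subset hsub, hcard]
  · intro V hV
    rw [mem_coe, mem_powersetCard] at hV
    obtain ⟨hsub, hcard⟩ := hV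
    have hdisj : Disjoint V S := by
      rw [Finset.disjoint_left]
      intro a ha
      have := hsub ha
      simp only [mem_compl] at this
      exact this
    refine mem_filter.2 ⟨mem_powersetCard.2 ⟨subset_univ _, ?_⟩, subset_union_right⟩
    rw [card_union_of_disjoint hdisj, hcard]
    omega
  · intro T hT
    simp only [mem_coe, mem_filter] at hT
    exact sdiff_union_of_subset hT.2
  · intro V hV
    rw [mem_coe, mem_powersetCard] at hV
    have hdisj : Disjoint V S := by
      rw [Finset.disjoint_left]
      intro a ha
      have := hV.1 ha
      simp only [mem_compl] at this
      exact this
    exact union_sdiff_cancel_right hdisj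

lemma aux_double_count (P : Finset α → Prop) [DecidablePred P] {m s : ℕ}
    (hms : m ≤ s) :
    ∑ T ∈ univ.powersetCard s, ((T.powersetCard m).filter P).card
      = ((univ.powersetCard m).filter P).card * (Fintype.card α - m).choose (s - m) := by
  have step1 : ∀ T ∈ univ.powersetCard s,
      ((T.powersetCard m).filter P).card
        = ∑ S ∈ (univ.powersetCard m).filter P, if S ⊆ T then 1 else 0 := by
    intro T hT
    rw [← Finset.card_filter]
    congr 1
    ext S
    simp only [mem_filter, mem_powersetCard, subset_univ, true_and]
    tauto
  rw [Finset.sum_congr rfl step1, Finset.sum_comm]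
  have step2 : ∀ S ∈ (univ.powersetCard m).filter P,
      ∑ T ∈ univ.powersetCard s, (if S ⊆ T then 1 else 0)
        = (Fintype.card α - m).choose (s - m) := by
    intro S hS
    simp only [mem_filter, mem_powersetCard] at hS
    rw [← Finset.card_filter]
    rw [aux_card_superset S (hS.1.2 ▸ hms), hS.1.2]
  rw [Finset.sum_congr rfl step2, Finset.sum_const, smul_eq_mul]

lemma aux_filter_image_card {n s : ℕ} (f : Fin s → Fin n) (hf : Function.Injective f)
    (T : Finset (Fin n)) (hT : Finset.univ.image f = T)
    (P : Finset (Fin n) → Prop) [DecidablePred P] (m : ℕ) :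
    ((univ.powersetCard m).filter (fun S => P (S.image f))).card
      = ((T.powersetCard m).filter P).card := by
  have himg2 : ((univ.powersetCard m).filter (fun S => P (S.image f))).image
      (Finset.image f) = (T.powersetCard m).filter P := by
    ext U
    simp only [Finset.mem_image, mem_filter, mem_powersetCard, subset_univ, true_and]
    constructor
    · rintro ⟨S, ⟨hcard, hP⟩, rfl⟩
      refine ⟨⟨?_, ?_⟩, hP⟩
      · rw [← hT]; exact image_subset_image (subset_univ S)
      · rw [Finset.card_image_of_injective _ hf, hcard]
    · rintro ⟨⟨hsub, hcard⟩, hP⟩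
      have : U ⊆ univ.image f := hT ▸ hsub
      obtain ⟨S, -, rfl⟩ := Finset.subset_image_iff.1 this
      exact ⟨S, ⟨by rwa [Finset.card_image_of_injective _ hf] at hcard, hP⟩, rfl⟩
  rw [← himg2, Finset.card_image_of_injective _ (Finset.image_injective hf)]

end Aux

open Classical in
/-- The `k`-dependence of an `r × s` matrix over a field `F`, where `m = r - k`:
the proportion of `m`-element subsets of the columns that are linearly dependent. -/
noncomputable def matKDep {F : Type} [Field F] {r s : ℕ}
    (M : Matrix (Fin r) (Fin s) F) (m : ℕ) : ℚ :=
  ((((Finset.univ : Finset (Fin s)).powersetCard m).filter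
      (fun S => ¬ LinearIndependent F (fun i : {x : Fin s // x ∈ S} => M.transpose i.1))).card : ℚ)
    / (s.choose m)

theorem stmt5 (q : ℕ) (hq : IsPrimePow q) (F : Type) [Field F] [Fintype F]
    (hF : Fintype.card F = q) (r k s s' : ℕ) (hr : 1 ≤ r) (hk : k ≤ r)
    (h1 : 1 ≤ r - k) (hs : r - k ≤ s) (hss' : s ≤ s') :
    (∀ M' : Matrix (Fin r) (Fin s') F, ∃ f : Fin s → Fin s', Function.Injective f ∧
      matKDep (M'.submatrix id f) (r - k) ≤ matKDep M' (r - k)) ∧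
    (∀ d : ℚ, (∃ M' : Matrix (Fin r) (Fin s') F, matKDep M' (r - k) ≤ d) →
      ∃ M : Matrix (Fin r) (Fin s) F, matKDep M (r - k) ≤ d) := by
  classical
  set m := r - k with hm
  have hms : m ≤ s := hs
  have hsn : s ≤ s' := hss'
  have key : ∀ M' : Matrix (Fin r) (Fin s') F, ∃ f : Fin s → Fin s', Function.Injective f ∧
      matKDep (M'.submatrix id f) m ≤ matKDep M' m := by
    intro M'
    set P : Finset (Fin s') → Prop :=
      fun U => ¬ LinearIndependent F (fun j : {y : Fin s' // y ∈ U} => M'.transpose j.1) with hP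
    set D : ℕ := ((univ.powersetCard m).filter P).card with hD
    -- averaging: find a good s-subset T
    have hne : (univ.powersetCard s (α := Fin s')).Nonempty := by
      rw [← Finset.card_pos, card_powersetCard, card_univ, Fintype.card_fin]
      exact Nat.choose_pos hsn
    have havg : ∃ T ∈ univ.powersetCard s (α := Fin s'),
        ((T.powersetCard m).filter P).card * s'.choose m ≤ D * s.choose m := by
      by_contra hcon
      push_neg at hcon
      have hlt := Finset.sum_lt_sum_of_nonempty hne (fun T hT => hcon T hT)
      rw [Finset.sum_const, ← Finset.sum_mul, aux_double_count P hms,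
        card_powersetCard, card_univ, Fintype.card_fin, smul_eq_mul] at hlt
      rw [← hD] at hlt
      have hch := Nat.choose_mul (n := s') (k := s) (s := m) hms
      have hid : s'.choose s * (D * s.choose m)
          = D * (s' - m).choose (s - m) * s'.choose m := by
        calc s'.choose s * (D * s.choose m) = D * (s'.choose s * s.choose m) := by ring
          _ = D * (s'.choose m * (s' - m).choose (s - m)) := by rw [hch]
          _ = D * (s' - m).choose (s - m) * s'.choose m := by ring
      rw [hid] at hlt
      exact lt_irrefl _ hlt
    obtain ⟨T, hTmem, hTle⟩ := havg
    rw [mem_powersetCard] at hTmem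
    obtain ⟨-, hTcard⟩ := hTmem
    set f : Fin s → Fin s' := fun i => (T.orderIsoOfFin hTcard i : Fin s') with hf
    have hfinj : Function.Injective f := by
      intro a b hab
      exact (T.orderIsoOfFin hTcard).injective (Subtype.ext hab)
    have himg : Finset.univ.image f = T := by
      ext y
      simp only [Finset.mem_image, Finset.mem_univ, true_and]
      constructor
      · rintro ⟨i, rfl⟩; exact ((T.orderIsoOfFin hTcard) i).2
      · intro hy
        refine ⟨(T.orderIsoOfFin hTcard).symm ⟨y, hy⟩, ?_⟩
        show ((T.orderIsoOfFin hTcard) ((T.orderIsoOfFin hTcard).symm ⟨y, hy⟩) : Fin s') = y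
        rw [(T.orderIsoOfFin hTcard).apply_symm_apply]
    refine ⟨f, hfinj, ?_⟩
    -- identify numerator of submatrix kDep
    have hcardeq : (((univ : Finset (Fin s)).powersetCard m).filter
        (fun S => ¬ LinearIndependent F
          (fun i : {x : Fin s // x ∈ S} => (M'.submatrix id f).transpose i.1))).card
        = ((T.powersetCard m).filter P).card := by
      rw [← aux_filter_image_card f hfinj T himg P m]
      congr 1
      apply Finset.filter_congr
      intro S hS
      obtain ⟨e, he⟩ : ∃ e : {x : Fin s // x ∈ S} ≃ {y : Fin s' // y ∈ S.image f},
          ∀ x, ((e x : {y : Fin s' // y ∈ S.image f}) : Fin s') = f x.1 := by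
        refine ⟨Equiv.ofBijective (fun x => ⟨f x.1, Finset.mem_image_of_mem f x.2⟩)
          ⟨?_, ?_⟩, fun x => rfl⟩
        · intro a b hab
          simp only [Subtype.mk.injEq] at hab
          exact Subtype.ext (hfinj hab)
        · rintro ⟨y, hy⟩
          obtain ⟨x, hx, rfl⟩ := Finset.mem_image.1 hy
          exact ⟨⟨x, hx⟩, rfl⟩
      have : LinearIndependent F
            (fun i : {x : Fin s // x ∈ S} => (M'.submatrix id f).transpose i.1)
          ↔ LinearIndependent F
            (fun j : {y : Fin s' // y ∈ S.image f} => M'.transpose j.1) := by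
        exact linearIndependent_equiv' e
          (g := fun i : {x : Fin s // x ∈ S} => (M'.submatrix id f).transpose i.1)
          (by funext x j; simp [Matrix.transpose_apply, Matrix.submatrix_apply, he x])
      simp only [hP]
      rw [this]
    -- final inequality
    unfold matKDep
    rw [hcardeq]
    have hpos1 : (0 : ℚ) < (s.choose m : ℚ) := by exact_mod_cast Nat.choose_pos hms
    have hpos2 : (0 : ℚ) < (s'.choose m : ℚ) := by exact_mod_cast Nat.choose_pos (hms.trans hsn)
    rw [div_le_div_iff₀ hpos1 hpos2]
    exact_mod_cast hTle
  refine ⟨key, ?_⟩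
  rintro d ⟨M', hM'⟩
  obtain ⟨f, -, hle⟩ := key M'
  exact ⟨M'.submatrix id f, hle.trans hM'⟩
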